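/- (Finite-aperture integral expansion.) For all real numbers x and φ and all real a < b, ∫_a^b exp(i x cos(θ − φ)) dθ = (b − a) J_0(x) + 4 ∑_{p=1}^∞ (i^p / p) J_p(x) cos(p((a + b)/2 − φ)) sin(p(b − a)/2), where the series converges absolutely. -/

import Mathlib

/-!
The function `t ↦ exp (i x sin t)` is smooth and `2π`-periodic with Fourier coefficients `J_n(x)`;
integrating by parts twice gives `J_n(x) = O(1/n²)`, so its Fourier series (the Jacobi–Anger
expansion) converges absolutely and pointwise. Shifting `t = s + π/2` and pairing `n` with `-n`
via `J_{-n} = (-1)ⁿ J_n` yields `exp (i x cos s) = J_0(x) + 2 ∑_{p ≥ 1} iᵖ J_p(x) cos (p s)`,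
dominated termwise by `2 |J_p(x)|`. Integrating over `[a, b]` term by term, with
`∫_a^b cos (p (θ - φ)) dθ = (2/p) cos (p ((a + b)/2 - φ)) sin (p (b - a)/2)`, gives the expansion.
-/

open MeasureTheory Filter

/-- Bessel function of the first kind of integer order `n`, via the integral
representation `J_n(x) = (1/(2π)) ∫_0^{2π} exp(i (x sin θ - n θ)) dθ`. -/
noncomputable def besselJ (n : ℤ) (x : ℝ) : ℂ :=
  (1 / (2 * Real.pi)) * ∫ θ in (0:ℝ)..(2 * Real.pi),
    Complex.exp (Complex.I * ((x : ℂ) * (Real.sin θ : ℂ) - (n : ℂ) * (θ : ℂ)))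

open Complex Set
open scoped Real Interval

section FourierCoeffOn

variable {a b : ℝ}

lemma norm_fourierCoeffOn_le (hab : a < b) {f : ℝ → ℂ} {M : ℝ} (hM : ∀ x ∈ Ioc a b, ‖f x‖ ≤ M)
    (n : ℤ) : ‖fourierCoeffOn hab f n‖ ≤ M := by
  have hba : 0 < b - a := sub_pos.mpr hab
  rw [fourierCoeffOn_eq_integral, norm_smul, Real.norm_eq_abs, abs_of_pos (by positivity),
    one_div, inv_mul_le_iff₀ hba]
  refine (intervalIntegral.norm_integral_le_of_norm_le_const fun x hx => ?_).trans_eq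
    (by rw [abs_of_pos hba, mul_comm])
  rw [norm_smul, fourier_apply, Circle.norm_coe, one_mul]
  exact hM x (uIoc_of_le hab.le ▸ hx)

lemma fourierCoeffOn_of_hasDerivAt_of_eq (hab : a < b) {f f' : ℝ → ℂ} {n : ℤ} (hn : n ≠ 0)
    (hf : ∀ x ∈ [[a, b]], HasDerivAt f (f' x) x) (hf' : IntervalIntegrable f' volume a b)
    (hfab : f a = f b) :
    fourierCoeffOn hab f n = (b - a) / (2 * π * I * n) * fourierCoeffOn hab f' n := by
  rw [fourierCoeffOn_of_hasDerivAt hab hn hf hf', hfab, sub_self, mul_zero, zero_sub]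
  have : (2 * π * I * n : ℂ) ≠ 0 := by simp [hn, Real.pi_ne_zero]
  field_simp

lemma norm_fourierCoeffOn_le_of_hasDerivAt_two (hab : a < b) {f f' f'' : ℝ → ℂ} {M : ℝ}
    (hf : ∀ x ∈ [[a, b]], HasDerivAt f (f' x) x) (hf' : ∀ x ∈ [[a, b]], HasDerivAt f' (f'' x) x)
    (hf'' : IntervalIntegrable f'' volume a b) (hfab : f a = f b) (hf'ab : f' a = f' b)
    (hM : ∀ x ∈ Ioc a b, ‖f'' x‖ ≤ M) {n : ℤ} (hn : n ≠ 0) :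
    ‖fourierCoeffOn hab f n‖ ≤ ((b - a) / (2 * π)) ^ 2 * M / n ^ 2 := by
  have hf'int : IntervalIntegrable f' volume a b :=
    ContinuousOn.intervalIntegrable fun x hx => (hf' x hx).continuousAt.continuousWithinAt
  have hscale : ‖(b - a : ℂ) / (2 * π * I * n)‖ = (b - a) / (2 * π) / |(n : ℝ)| := by
    have hden : ‖(2 * π * I * n : ℂ)‖ = 2 * π * |(n : ℝ)| := by
      simp [abs_of_pos Real.pi_pos]
    rw [norm_div, hden, ← ofReal_sub, norm_real, Real.norm_of_nonneg (sub_pos.mpr hab).le]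
    ring
  rw [fourierCoeffOn_of_hasDerivAt_of_eq hab hn hf hf'int hfab,
    fourierCoeffOn_of_hasDerivAt_of_eq hab hn hf' hf'' hf'ab, ← mul_assoc, norm_mul, norm_mul,
    hscale]
  calc (b - a) / (2 * π) / |(n : ℝ)| * ((b - a) / (2 * π) / |(n : ℝ)|) * ‖fourierCoeffOn hab f'' n‖
      ≤ (b - a) / (2 * π) / |(n : ℝ)| * ((b - a) / (2 * π) / |(n : ℝ)|) * M := by
        have := sub_pos.mpr hab
        exact mul_le_mul_of_nonneg_left (norm_fourierCoeffOn_le hab hM n) (by positivity)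
    _ = ((b - a) / (2 * π)) ^ 2 * M / n ^ 2 := by
        rw [← sq_abs (n : ℝ)]; ring

lemma summable_norm_fourierCoeffOn_of_hasDerivAt_two (hab : a < b) {f f' f'' : ℝ → ℂ} {M : ℝ}
    (hf : ∀ x ∈ [[a, b]], HasDerivAt f (f' x) x) (hf' : ∀ x ∈ [[a, b]], HasDerivAt f' (f'' x) x)
    (hf'' : IntervalIntegrable f'' volume a b) (hfab : f a = f b) (hf'ab : f' a = f' b)
    (hM : ∀ x ∈ Ioc a b, ‖f'' x‖ ≤ M) :
    Summable fun n : ℤ => ‖fourierCoeffOn hab f n‖ := by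
  have hsq : Summable fun n : ℤ => ((b - a) / (2 * π)) ^ 2 * M / (n : ℝ) ^ 2 :=
    ((Real.summable_one_div_int_pow.mpr one_lt_two).mul_left _).congr fun n => mul_one_div _ _
  refine Summable.of_norm_bounded_eventually hsq ?_
  filter_upwards [(Set.finite_singleton (0 : ℤ)).compl_mem_cofinite] with n hn
  rw [norm_norm]
  exact norm_fourierCoeffOn_le_of_hasDerivAt_two hab hf hf' hf'' hfab hf'ab hM hn

lemma hasSum_fourierCoeffOn_mul_fourier (hab : a < b) {f : ℝ → ℂ} (hf : Continuous f)
    (hper : Function.Periodic f (b - a)) (hsum : Summable (fourierCoeffOn hab f)) (x : ℝ) :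
    HasSum (fun n : ℤ => fourierCoeffOn hab f n * fourier n (x : AddCircle (b - a))) (f x) := by
  have : Fact (0 < b - a) := ⟨sub_pos.mpr hab⟩
  let F : C(AddCircle (b - a), ℂ) := ⟨hper.lift, hf.quotient_liftOn' _⟩
  have hF : fourierCoeff F = fourierCoeffOn hab f := by
    ext n
    rw [fourierCoeff_eq_intervalIntegral _ _ a, fourierCoeffOn_eq_integral, add_sub_cancel]
    rfl
  have := has_pointwise_sum_fourier_series_of_summable (f := F) (by rwa [hF]) x
  rw [hF] at this
  simp only [smul_eq_mul] at this
  exact this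

end FourierCoeffOn

lemma besselJ_eq_fourierCoeffOn (n : ℤ) (x : ℝ) :
    besselJ n x = fourierCoeffOn Real.two_pi_pos (fun t => cexp (I * x * Real.sin t)) n := by
  rw [fourierCoeffOn_eq_integral, besselJ, sub_zero, real_smul]
  congr 1
  · push_cast; ring
  · refine intervalIntegral.integral_congr fun θ _ => ?_
    have : (π : ℂ) ≠ 0 := ofReal_ne_zero.mpr Real.pi_ne_zero
    simp only [fourier_coe_apply, smul_eq_mul, ← Complex.exp_add]
    congr 1
    field_simp
    push_cast
    ring

lemma hasDerivAt_cexp_I_mul_sin (x t : ℝ) :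
    HasDerivAt (fun t : ℝ => cexp (I * x * Real.sin t))
      (I * x * Real.cos t * cexp (I * x * Real.sin t)) t := by
  have := (((Real.hasDerivAt_sin t).ofReal_comp).const_mul (I * x)).cexp
  convert this using 1
  ring

lemma hasDerivAt_I_mul_cos_mul_cexp_I_mul_sin (x t : ℝ) :
    HasDerivAt (fun t : ℝ => I * x * Real.cos t * cexp (I * x * Real.sin t))
      ((-(I * x * Real.sin t) - x ^ 2 * Real.cos t ^ 2) * cexp (I * x * Real.sin t)) t := by
  have := (((Real.hasDerivAt_cos t).ofReal_comp).const_mul (I * x)).mul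
    (hasDerivAt_cexp_I_mul_sin x t)
  refine this.congr_deriv ?_
  rw [ofReal_neg]
  linear_combination (x ^ 2 * Real.cos t ^ 2 * cexp (I * x * Real.sin t) : ℂ) * I_sq

lemma norm_cexp_I_mul_sin (x t : ℝ) : ‖cexp (I * x * Real.sin t)‖ = 1 := by
  rw [show I * x * Real.sin t = ((x * Real.sin t : ℝ) : ℂ) * I by push_cast; ring]
  exact norm_exp_ofReal_mul_I _

lemma norm_second_deriv_cexp_I_mul_sin_le (x t : ℝ) :
    ‖(-(I * x * Real.sin t) - x ^ 2 * Real.cos t ^ 2) * cexp (I * x * Real.sin t)‖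
      ≤ |x| + x ^ 2 := by
  rw [norm_mul, norm_cexp_I_mul_sin, mul_one]
  refine (norm_sub_le _ _).trans (add_le_add ?_ ?_)
  · rw [norm_neg, norm_mul, norm_mul, norm_I, one_mul, norm_real, norm_real, Real.norm_eq_abs,
      Real.norm_eq_abs]
    exact mul_le_of_le_one_right (abs_nonneg x) (Real.abs_sin_le_one t)
  · rw [← ofReal_pow, ← ofReal_pow, ← ofReal_mul, norm_real, Real.norm_of_nonneg (by positivity)]
    exact mul_le_of_le_one_right (sq_nonneg x) (Real.cos_sq_le_one t)

lemma summable_norm_besselJ (x : ℝ) : Summable fun n : ℤ => ‖besselJ n x‖ := by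
  simp_rw [besselJ_eq_fourierCoeffOn]
  exact summable_norm_fourierCoeffOn_of_hasDerivAt_two Real.two_pi_pos
    (fun t _ => hasDerivAt_cexp_I_mul_sin x t)
    (fun t _ => hasDerivAt_I_mul_cos_mul_cexp_I_mul_sin x t)
    (Continuous.intervalIntegrable (by fun_prop) _ _) (by simp) (by simp)
    (fun t _ => norm_second_deriv_cexp_I_mul_sin_le x t)

/-- The Jacobi–Anger expansion. -/
lemma hasSum_besselJ_mul_cexp (x t : ℝ) :
    HasSum (fun n : ℤ => besselJ n x * cexp (I * n * t)) (cexp (I * x * Real.sin t)) := by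
  have hper : Function.Periodic (fun t : ℝ => cexp (I * x * Real.sin t)) (2 * π - 0) := by
    intro t
    simp [Real.sin_add_two_pi]
  have hJ : fourierCoeffOn Real.two_pi_pos (fun t => cexp (I * x * Real.sin t)) =
      fun n => besselJ n x := funext fun n => (besselJ_eq_fourierCoeffOn n x).symm
  have := hasSum_fourierCoeffOn_mul_fourier Real.two_pi_pos (by fun_prop) hper
    (hJ ▸ (summable_norm_besselJ x).of_norm) t
  simp only [hJ, fourier_coe_apply, sub_zero] at this
  convert this using 4
  have : (π : ℂ) ≠ 0 := ofReal_ne_zero.mpr Real.pi_ne_zero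
  push_cast
  field_simp

lemma besselJ_neg (n : ℤ) (x : ℝ) : besselJ (-n) x = (-1) ^ n * besselJ n x := by
  let h : ℝ → ℂ := fun u => cexp (I * (x * Real.sin u - n * u))
  have hper : Function.Periodic h (2 * π) := by
    intro u
    simp only [h, Real.sin_add_two_pi]
    rw [show I * (x * Real.sin u - n * ((u + 2 * π : ℝ) : ℂ)) =
        I * (x * Real.sin u - n * u) + (-n : ℤ) * (2 * π * I) by push_cast; ring,
      exp_add, exp_int_mul_two_pi_mul_I, mul_one]
  -- the substitution `θ ↦ π - θ`, after which `2π`-periodicity moves `[-π, π]` back to `[0, 2π]`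
  have hrefl : ∀ θ : ℝ, cexp (I * (x * Real.sin θ - ((-n : ℤ) : ℂ) * θ)) = (-1) ^ n * h (π - θ) := by
    intro θ
    simp only [h, Real.sin_pi_sub]
    rw [← exp_pi_mul_I, ← exp_int_mul, ← exp_add]
    congr 1
    push_cast
    ring
  have hshift := hper.intervalIntegral_add_eq (π - 2 * π) 0
  rw [sub_add_cancel, zero_add] at hshift
  rw [besselJ, besselJ, intervalIntegral.integral_congr fun θ _ => hrefl θ,
    intervalIntegral.integral_const_mul, intervalIntegral.integral_comp_sub_left h π, sub_zero,
    hshift]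
  ring

lemma besselJ_mul_cexp_add_besselJ_neg_mul_cexp (n : ℕ) (x s : ℝ) :
    besselJ n x * cexp (I * ((n : ℤ) : ℂ) * ((s + π / 2 : ℝ) : ℂ)) +
        besselJ (-n) x * cexp (I * ((-n : ℤ) : ℂ) * ((s + π / 2 : ℝ) : ℂ)) =
      2 * I ^ n * besselJ n x * Real.cos (n * s) := by
  have e1 : cexp (I * ((n : ℤ) : ℂ) * ((s + π / 2 : ℝ) : ℂ)) = I ^ n * cexp ((n * s : ℝ) * I) := by
    rw [← exp_pi_div_two_mul_I, ← exp_nat_mul, ← exp_add, exp_pi_div_two_mul_I]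
    congr 1
    push_cast
    ring
  have e2 : cexp (I * ((-n : ℤ) : ℂ) * ((s + π / 2 : ℝ) : ℂ)) =
      (-I) ^ n * cexp (-(n * s : ℝ) * I) := by
    rw [← exp_neg_pi_div_two_mul_I, ← exp_nat_mul, ← exp_add]
    congr 1
    push_cast
    ring
  have e3 : (-1 : ℂ) ^ n * (-I) ^ n = I ^ n := by rw [← mul_pow, neg_one_mul, neg_neg]
  rw [besselJ_neg, zpow_natCast, e1, e2, ofReal_cos]
  linear_combination -(I ^ n * besselJ n x) * two_cos ((n * s : ℝ) : ℂ) +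
    (besselJ n x * cexp (-(n * s : ℝ) * I)) * e3

lemma hasSum_besselJ_mul_cos (x s : ℝ) :
    HasSum (fun p : ℕ => 2 * I ^ (p + 1) * besselJ (p + 1) x * Real.cos ((p + 1) * s))
      (cexp (I * x * Real.cos s) - besselJ 0 x) := by
  have h := (hasSum_besselJ_mul_cexp x (s + π / 2)).nat_add_neg
  simp only [besselJ_mul_cexp_add_besselJ_neg_mul_cexp] at h
  rw [← hasSum_nat_add_iff' 1] at h
  rw [Real.sin_add_pi_div_two, Finset.sum_range_one] at h
  simp only [Nat.cast_add, Nat.cast_one, Int.cast_zero, mul_zero, zero_mul, exp_zero, mul_one,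
    pow_zero, Nat.cast_zero, Real.cos_zero, ofReal_one] at h
  rwa [show ∀ u v : ℂ, u + v - 2 * v = u - v from fun u v => by ring] at h

lemma integral_cos_mul_sub (k φ a b : ℝ) (hk : k ≠ 0) :
    ∫ θ in a..b, Real.cos (k * (θ - φ)) =
      2 * Real.cos (k * ((a + b) / 2 - φ)) * Real.sin (k * (b - a) / 2) / k := by
  simp_rw [mul_sub]
  rw [intervalIntegral.integral_comp_mul_sub (f := Real.cos) hk, integral_cos, Real.sin_sub_sin,
    smul_eq_mul]
  field_simp
  ring_nf

lemma summable_norm_besselJ_nat_add_one (x : ℝ) :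
    Summable fun p : ℕ => ‖besselJ (p + 1) x‖ :=
  (summable_norm_besselJ x).comp_injective fun p q h => by simpa using h

lemma hasSum_intervalIntegral_besselJ_mul_cos (x φ a b : ℝ) :
    HasSum (fun p : ℕ => ∫ θ in a..b, 2 * I ^ (p + 1) * besselJ (p + 1) x *
        (Real.cos ((p + 1) * (θ - φ)) : ℂ))
      (∫ θ in a..b, (cexp (I * x * Real.cos (θ - φ)) - besselJ 0 x)) := by
  refine intervalIntegral.hasSum_integral_of_dominated_convergence
    (fun p _ => 2 * ‖besselJ (p + 1) x‖) (fun p => by fun_prop) (fun p => ?_)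
    (ae_of_all _ fun _ _ => (summable_norm_besselJ_nat_add_one x).mul_left 2)
    intervalIntegrable_const (ae_of_all _ fun θ _ => hasSum_besselJ_mul_cos x (θ - φ))
  refine ae_of_all _ fun θ _ => ?_
  simp only [norm_mul, norm_pow, norm_I, one_pow, mul_one, norm_real, Real.norm_eq_abs,
    Complex.norm_ofNat]
  exact mul_le_of_le_one_right (by positivity) (Real.abs_cos_le_one _)

lemma integral_two_mul_I_pow_mul_besselJ_mul_cos (x φ a b : ℝ) (p : ℕ) :
    ∫ θ in a..b, 2 * I ^ (p + 1) * besselJ (p + 1) x * (Real.cos ((p + 1) * (θ - φ)) : ℂ) =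
      4 * (I ^ (p + 1) / ((p : ℂ) + 1)) * besselJ (p + 1) x *
        Real.cos ((p + 1) * ((a + b) / 2 - φ)) * Real.sin ((p + 1) * (b - a) / 2) := by
  rw [intervalIntegral.integral_const_mul, intervalIntegral.integral_ofReal,
    integral_cos_mul_sub _ _ _ _ (Nat.cast_add_one_ne_zero p)]
  push_cast
  field_simp
  ring

lemma norm_four_mul_I_pow_div_mul_cos_mul_sin_le (p : ℕ) (z : ℂ) (u v : ℝ) :
    ‖4 * (I ^ (p + 1) / ((p : ℂ) + 1)) * z * Real.cos u * Real.sin v‖ ≤ 4 * ‖z‖ := by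
  have hp : ‖(p : ℂ) + 1‖ = p + 1 := by exact_mod_cast norm_natCast (p + 1)
  simp only [norm_mul, norm_div, norm_pow, norm_I, one_pow, norm_real, Real.norm_eq_abs,
    Complex.norm_ofNat, hp]
  calc 4 * (1 / ((p : ℝ) + 1)) * ‖z‖ * |Real.cos u| * |Real.sin v|
      ≤ 4 * 1 * ‖z‖ * 1 * 1 := by
        gcongr
        · exact div_le_one_of_le₀ (by linarith [p.cast_nonneg (α := ℝ)]) (by positivity)
        · exact Real.abs_cos_le_one u
        · exact Real.abs_sin_le_one v
    _ = 4 * ‖z‖ := by ring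

theorem finite_aperture_expansion_general (x φ a b : ℝ) :
    Summable (fun p : ℕ =>
      ‖(4 : ℂ) * (Complex.I ^ (p + 1) / ((p : ℂ) + 1)) * besselJ (p + 1) x *
        (Real.cos (((p : ℝ) + 1) * ((a + b) / 2 - φ)) : ℂ) *
        (Real.sin (((p : ℝ) + 1) * (b - a) / 2) : ℂ)‖) ∧
    (∫ θ in a..b, Complex.exp (Complex.I * (x : ℂ) * (Real.cos (θ - φ) : ℂ)))
      = ((b : ℂ) - (a : ℂ)) * besselJ 0 x +
        ∑' p : ℕ,
          (4 : ℂ) * (Complex.I ^ (p + 1) / ((p : ℂ) + 1)) * besselJ (p + 1) x *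
            (Real.cos (((p : ℝ) + 1) * ((a + b) / 2 - φ)) : ℂ) *
            (Real.sin (((p : ℝ) + 1) * (b - a) / 2) : ℂ) := by
  have hsum := hasSum_intervalIntegral_besselJ_mul_cos x φ a b
  simp only [integral_two_mul_I_pow_mul_besselJ_mul_cos] at hsum
  refine ⟨((summable_norm_besselJ_nat_add_one x).mul_left 4).of_nonneg_of_le
    (fun _ => norm_nonneg _) fun p => norm_four_mul_I_pow_div_mul_cos_mul_sin_le p _ _ _, ?_⟩
  rw [hsum.tsum_eq, intervalIntegral.integral_sub (Continuous.intervalIntegrable (by fun_prop) _ _)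
    intervalIntegrable_const, intervalIntegral.integral_const, real_smul]
  push_cast
  ring

/-- Finite-aperture integral expansion: for all real `x`, `φ` and all real `a < b`,
`∫_a^b exp(i x cos(θ − φ)) dθ
  = (b − a) J_0(x) + 4 ∑_{p=1}^∞ (i^p / p) J_p(x) cos(p((a + b)/2 − φ)) sin(p(b − a)/2)`,
the series converging absolutely. -/
theorem finite_aperture_expansion (x φ a b : ℝ) (hab : a < b) :
    Summable (fun p : ℕ =>
      ‖(4 : ℂ) * (Complex.I ^ (p + 1) / ((p : ℂ) + 1)) * besselJ (p + 1) x *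
        (Real.cos (((p : ℝ) + 1) * ((a + b) / 2 - φ)) : ℂ) *
        (Real.sin (((p : ℝ) + 1) * (b - a) / 2) : ℂ)‖) ∧
    (∫ θ in a..b, Complex.exp (Complex.I * (x : ℂ) * (Real.cos (θ - φ) : ℂ)))
      = ((b : ℂ) - (a : ℂ)) * besselJ 0 x +
        ∑' p : ℕ,
          (4 : ℂ) * (Complex.I ^ (p + 1) / ((p : ℂ) + 1)) * besselJ (p + 1) x *
            (Real.cos (((p : ℝ) + 1) * ((a + b) / 2 - φ)) : ℂ) *
            (Real.sin (((p : ℝ) + 1) * (b - a) / 2) : ℂ) :=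
  finite_aperture_expansion_general x φ a b
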